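/- arXiv:2605.28335 — 2 statements merged into one kernel-verified Lean document; each statement's English description precedes it below -/
import Mathlib

section
/- One-step strongly convex recurrence: suppose D_{t+1} ≤ (1 - η_t μ/2) D_t + (4η_t/μ) Φ where η_t = 2/(μ(t+γ)) for a real γ > 1 and all t ≥ 0. Then for every T ≥ 0, D_T - (8/μ²)Φ ≤ ((γ-1)/(T+γ-1))·(D_0 - (8/μ²)Φ). -/
/-!
With `C = 8Φ/μ²`, the step size `η_t = 2/(μ(t+γ))` turns the recurrence into the contraction
`D_{t+1} - C ≤ ((t+γ-1)/(t+γ)) (D_t - C)`. Hence `(t+γ-1)(D_t - C)` is nonincreasing in `t`,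
and comparing its values at `T` and `0` gives the bound.
-/

theorem le_div_mul_of_le_div_mul_succ {E : ℕ → ℝ} {a : ℝ} (ha : 1 < a)
    (h : ∀ t : ℕ, E (t + 1) ≤ (t + a - 1) / (t + a) * E t) (T : ℕ) :
    E T ≤ (a - 1) / (T + a - 1) * E 0 := by
  have hweighted : Antitone fun t : ℕ ↦ (t + a - 1) * E t := by
    refine antitone_nat_of_succ_le fun t ↦ ?_
    have hpos : (0 : ℝ) < t + a := by positivity
    calc ((t + 1 : ℕ) + a - 1) * E (t + 1) = (t + a) * E (t + 1) := by push_cast; ring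
      _ ≤ (t + a) * ((t + a - 1) / (t + a) * E t) := by gcongr; exact h t
      _ = (t + a - 1) * E t := by field_simp
  have hT : (0 : ℝ) < T + a - 1 := by linarith [T.cast_nonneg (α := ℝ)]
  rw [div_mul_eq_mul_div, le_div_iff₀ hT, mul_comm]
  simpa using hweighted (Nat.zero_le T)

theorem stmt_14_general (μ γ Φ : ℝ) (hμ : 0 < μ) (hγ : 1 < γ)
    (D : ℕ → ℝ)
    (η : ℕ → ℝ) (hη : ∀ t, η t = 2 / (μ * (t + γ)))
    (hrec : ∀ t, D (t + 1) ≤ (1 - η t * μ / 2) * D t + (4 * η t / μ) * Φ) :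
    ∀ T : ℕ, D T - (8 / μ ^ 2) * Φ ≤
      ((γ - 1) / (T + γ - 1)) * (D 0 - (8 / μ ^ 2) * Φ) := by
  refine le_div_mul_of_le_div_mul_succ hγ fun t ↦ ?_
  have hs : (0 : ℝ) < t + γ := by positivity
  calc D (t + 1) - 8 / μ ^ 2 * Φ
      ≤ (1 - η t * μ / 2) * D t + (4 * η t / μ) * Φ - 8 / μ ^ 2 * Φ := by linarith [hrec t]
    _ = (t + γ - 1) / (t + γ) * (D t - 8 / μ ^ 2 * Φ) := by
      rw [hη]; field_simp; ring

theorem stmt_14 (μ γ Φ : ℝ) (hμ : 0 < μ) (hγ : 1 < γ) (hΦ : 0 ≤ Φ)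
    (D : ℕ → ℝ) (hD : ∀ t, 0 ≤ D t)
    (η : ℕ → ℝ) (hη : ∀ t, η t = 2 / (μ * (t + γ)))
    (hrec : ∀ t, D (t + 1) ≤ (1 - η t * μ / 2) * D t + (4 * η t / μ) * Φ) :
    ∀ T : ℕ, D T - (8 / μ ^ 2) * Φ ≤
      ((γ - 1) / (T + γ - 1)) * (D 0 - (8 / μ ^ 2) * Φ) :=
  stmt_14_general μ γ Φ hμ hγ D η hη hrec
end

section
/- Final strongly convex bound: under the recurrence D_{t+1} ≤ ((t+γ-1)/(t+γ)) D_t + (8Φ)/(μ²(t+γ)) with D_t ≥ 0, μ > 0, γ > 1, Φ ≥ 0, one has D_T ≤ ((γ-1)/(T+γ-1)) D_0 + (8/μ²)Φ for all T ≥ 0. -/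
/-! Multiplying the recurrence by `t + γ` makes it telescope:
`(t + γ) D (t+1) ≤ (t + γ - 1) D t + C` with `C = 8Φ/μ²`, hence `(T + γ - 1) D T ≤ (γ - 1) D 0 + T C`,
and `T / (T + γ - 1) ≤ 1`. -/

theorem weighted_le_of_le_ratio_mul_add {γ C : ℝ} (hγ : 1 < γ) {D : ℕ → ℝ}
    (hrec : ∀ t : ℕ, D (t + 1) ≤ (t + γ - 1) / (t + γ) * D t + C / (t + γ)) (T : ℕ) :
    (T + γ - 1) * D T ≤ (γ - 1) * D 0 + T * C := by
  induction T with
  | zero => simp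
  | succ t ih =>
    have hpos : (0 : ℝ) < t + γ := by positivity
    have hstep : (t + γ) * D (t + 1) ≤ (t + γ - 1) * D t + C := by
      have h := hrec t
      rw [div_mul_eq_mul_div, ← add_div, le_div_iff₀ hpos] at h
      linarith
    push_cast
    linarith

theorem le_of_le_ratio_mul_add {γ C : ℝ} (hγ : 1 < γ) (hC : 0 ≤ C) {D : ℕ → ℝ}
    (hrec : ∀ t : ℕ, D (t + 1) ≤ (t + γ - 1) / (t + γ) * D t + C / (t + γ)) (T : ℕ) :
    D T ≤ (γ - 1) / (T + γ - 1) * D 0 + C := by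
  have hpos : (0 : ℝ) < T + γ - 1 := by linarith [T.cast_nonneg (α := ℝ)]
  have hTC : T * C ≤ (T + γ - 1) * C := by nlinarith
  refine le_of_mul_le_mul_left ?_ hpos
  rw [mul_add, ← mul_assoc, mul_div_cancel₀ _ hpos.ne']
  linarith [weighted_le_of_le_ratio_mul_add hγ hrec T]

theorem stmt_16_general (μ γ Φ : ℝ) (hγ : 1 < γ) (hΦ : 0 ≤ Φ)
    (D : ℕ → ℝ)
    (hrec : ∀ t : ℕ, D (t + 1) ≤ ((t + γ - 1) / (t + γ)) * D t
      + (8 * Φ) / (μ ^ 2 * (t + γ))) :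
    ∀ T : ℕ, D T ≤ ((γ - 1) / (T + γ - 1)) * D 0 + (8 / μ ^ 2) * Φ := by
  refine le_of_le_ratio_mul_add hγ (by positivity) fun t => ?_
  convert hrec t using 2
  rw [div_mul_eq_mul_div, div_div]

theorem stmt_16 (μ γ Φ : ℝ) (hμ : 0 < μ) (hγ : 1 < γ) (hΦ : 0 ≤ Φ)
    (D : ℕ → ℝ) (hD : ∀ t, 0 ≤ D t)
    (hrec : ∀ t : ℕ, D (t + 1) ≤ ((t + γ - 1) / (t + γ)) * D t
      + (8 * Φ) / (μ ^ 2 * (t + γ))) :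
    ∀ T : ℕ, D T ≤ ((γ - 1) / (T + γ - 1)) * D 0 + (8 / μ ^ 2) * Φ :=
  stmt_16_general μ γ Φ hγ hΦ D hrec
end
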